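/- arXiv:2302.14792 — 2 statements merged into one kernel-verified Lean document; each statement's English description precedes it below -/
import Mathlib

section
/- Let F be a useful function. (1) For all a ≤ b and c ≤ d in ℝ, the set G(F) ∩ ([a,b]×[c,d]) is closed in ℝ². (2) For any a ≤ b in ℝ, F has a local maximum on [a,b] in the sense that there exists x ∈ [a,b] with max F(y) ≤ max F(x) for all y ∈ [a,b]. (3) For any a ≤ b in ℝ, F has a local minimum on [a,b] in the sense that there exists x ∈ [a,b] with min F(x) ≤ min F(y) for all y ∈ [a,b]. -/
/-!
Useful functions, their graphs, and local extrema (Lemma 2.12 of the paper).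
-/

noncomputable section

open Filter Topology

/-- `Δx⁻`, the indicator function of `[x, ∞)`. -/
def deltaMinus (x : ℝ) : ℝ → ℝ := Set.indicator (Set.Ici x) 1

/-- `Δx⁺`, the indicator function of `(x, ∞)`. -/
def deltaPlus (x : ℝ) : ℝ → ℝ := Set.indicator (Set.Ioi x) 1

/-- `F` is a useful function, with decomposition data `f` (continuous of bounded variation)
and coefficient families `um = (u_x⁻)`, `up = (u_x⁺)`. -/
structure IsUseful (F f um up : ℝ → ℝ) : Prop where
  cont : Continuous f
  bddVar : BoundedVariationOn f Set.univ
  summable_um : Summable fun x : ℝ => |um x|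
  summable_up : Summable fun x : ℝ => |up x|
  decomp : ∀ t : ℝ,
    F t = f t + (∑' x : ℝ, um x * deltaMinus x t) + (∑' x : ℝ, up x * deltaPlus x t)

/-- `min F (a) = min {F(a), F₋(a), F₊(a)}`. -/
def minF (F : ℝ → ℝ) (a : ℝ) : ℝ :=
  min (F a) (min (Function.leftLim F a) (Function.rightLim F a))

/-- `max F (a) = max {F(a), F₋(a), F₊(a)}`. -/
def maxF (F : ℝ → ℝ) (a : ℝ) : ℝ :=
  max (F a) (max (Function.leftLim F a) (Function.rightLim F a))

/-- The graph `𝒢(F) = {(x,y) | min F (x) ≤ y ≤ max F (x)}` of a useful function. -/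
def graphOf (F : ℝ → ℝ) : Set (ℝ × ℝ) :=
  {p : ℝ × ℝ | minF F p.1 ≤ p.2 ∧ p.2 ≤ maxF F p.1}

/-!
Splitting the jump coefficients into positive and negative parts and `f` by Jordan decomposition,
`F = g - h` with `g`, `h` monotone. For `y < x` we have `max F (y) ≤ g₊(y) - h₋(y) ≤ g₋(x) - h₋(y)`,
and `h₋` is left continuous, so the bound tends to `F₋(x) ≤ max F (x)` as `y → x⁻`; symmetrically
from the right. Hence `max F` is upper semicontinuous and, as `min F = -max (-F)`, `min F` is lower
semicontinuous. Then `G(F)` is the intersection of the closed hypograph of `max F` with the closed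
epigraph of `min F`, and semicontinuous functions attain their extrema on compact intervals.
-/

open Function Set

section JumpSum

variable {ι : Type*} {v : ι → ℝ} {D : ι → ℝ → ℝ}

lemma summable_mul_of_abs_le_one (hv : Summable fun i => |v i|) (hD : ∀ i t, |D i t| ≤ 1)
    (t : ℝ) : Summable fun i => v i * D i t :=
  hv.of_norm_bounded fun i => by
    rw [Real.norm_eq_abs, abs_mul]
    exact mul_le_of_le_one_right (abs_nonneg _) (hD i t)

lemma monotone_tsum_mul (hv₀ : ∀ i, 0 ≤ v i) (hv : Summable v) (hDm : ∀ i, Monotone (D i))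
    (hD : ∀ i t, |D i t| ≤ 1) : Monotone fun t => ∑' i, v i * D i t := by
  intro s t hst
  exact (summable_mul_of_abs_le_one hv.abs hD s).tsum_le_tsum
    (fun i => mul_le_mul_of_nonneg_left (hDm i hst) (hv₀ i))
    (summable_mul_of_abs_le_one hv.abs hD t)

lemma exists_monotone_sub_tsum_mul (hv : Summable fun i => |v i|) (hDm : ∀ i, Monotone (D i))
    (hD : ∀ i t, |D i t| ≤ 1) :
    ∃ g h : ℝ → ℝ, Monotone g ∧ Monotone h ∧ (fun t => ∑' i, v i * D i t) = g - h := by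
  have hpos : Summable fun i => (v i)⁺ := hv.of_nonneg_of_le (fun i => posPart_nonneg _)
    fun i => by rw [← posPart_add_negPart]; exact le_add_of_nonneg_right (negPart_nonneg _)
  have hneg : Summable fun i => (v i)⁻ := hv.of_nonneg_of_le (fun i => negPart_nonneg _)
    fun i => by rw [← posPart_add_negPart]; exact le_add_of_nonneg_left (posPart_nonneg _)
  refine ⟨fun t => ∑' i, (v i)⁺ * D i t, fun t => ∑' i, (v i)⁻ * D i t,
    monotone_tsum_mul (fun i => posPart_nonneg _) hpos hDm hD,
    monotone_tsum_mul (fun i => negPart_nonneg _) hneg hDm hD, funext fun t => ?_⟩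
  rw [Pi.sub_apply, ← (summable_mul_of_abs_le_one hpos.abs hD t).tsum_sub
    (summable_mul_of_abs_le_one hneg.abs hD t)]
  simp only [← sub_mul, posPart_sub_negPart]

end JumpSum

lemma monotone_deltaMinus (x : ℝ) : Monotone (deltaMinus x) := fun s t hst => by
  simp only [deltaMinus, indicator_apply, mem_Ici, Pi.one_apply]
  split_ifs <;> first | exact le_rfl | exact zero_le_one | linarith

lemma monotone_deltaPlus (x : ℝ) : Monotone (deltaPlus x) := fun s t hst => by
  simp only [deltaPlus, indicator_apply, mem_Ioi, Pi.one_apply]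
  split_ifs <;> first | exact le_rfl | exact zero_le_one | linarith

lemma abs_deltaMinus_le_one (x t : ℝ) : |deltaMinus x t| ≤ 1 := by
  simp only [deltaMinus, indicator_apply, Pi.one_apply]
  split_ifs <;> simp

lemma abs_deltaPlus_le_one (x t : ℝ) : |deltaPlus x t| ≤ 1 := by
  simp only [deltaPlus, indicator_apply, Pi.one_apply]
  split_ifs <;> simp

lemma IsUseful.exists_monotone_sub {F f um up : ℝ → ℝ} (hF : IsUseful F f um up) :
    ∃ g h : ℝ → ℝ, Monotone g ∧ Monotone h ∧ F = g - h := by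
  obtain ⟨p, q, hp, hq, hf⟩ :=
    hF.bddVar.locallyBoundedVariationOn.exists_monotoneOn_sub_monotoneOn
  obtain ⟨g₁, h₁, hg₁, hh₁, e₁⟩ :=
    exists_monotone_sub_tsum_mul hF.summable_um monotone_deltaMinus abs_deltaMinus_le_one
  obtain ⟨g₂, h₂, hg₂, hh₂, e₂⟩ :=
    exists_monotone_sub_tsum_mul hF.summable_up monotone_deltaPlus abs_deltaPlus_le_one
  refine ⟨p + g₁ + g₂, q + h₁ + h₂, ((monotoneOn_univ.mp hp).add hg₁).add hg₂,
    ((monotoneOn_univ.mp hq).add hh₁).add hh₂, funext fun t => ?_⟩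
  have e₁t := congrFun e₁ t
  have e₂t := congrFun e₂ t
  have hft := congrFun hf t
  simp only [Pi.add_apply, Pi.sub_apply] at e₁t e₂t hft ⊢
  rw [hF.decomp t, e₁t, e₂t, hft]
  ring

lemma leftLim_le_maxF (F : ℝ → ℝ) (x : ℝ) : leftLim F x ≤ maxF F x :=
  (le_max_left _ _).trans (le_max_right _ _)

lemma rightLim_le_maxF (F : ℝ → ℝ) (x : ℝ) : rightLim F x ≤ maxF F x :=
  (le_max_right _ _).trans (le_max_right _ _)

lemma isClosed_graphOf {F : ℝ → ℝ} (hmin : LowerSemicontinuous (minF F))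
    (hmax : UpperSemicontinuous (maxF F)) : IsClosed (graphOf F) :=
  hmin.isClosed_epigraph.inter hmax.IsClosed_hypograph

namespace Monotone

variable {g h : ℝ → ℝ}

lemma leftLim_sub (hg : Monotone g) (hh : Monotone h) (x : ℝ) :
    leftLim (g - h) x = leftLim g x - leftLim h x :=
  leftLim_eq_of_tendsto ((hg.tendsto_leftLim x).sub (hh.tendsto_leftLim x))

lemma rightLim_sub (hg : Monotone g) (hh : Monotone h) (x : ℝ) :
    rightLim (g - h) x = rightLim g x - rightLim h x :=
  rightLim_eq_of_tendsto ((hg.tendsto_rightLim x).sub (hh.tendsto_rightLim x))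

lemma maxF_sub_le (hg : Monotone g) (hh : Monotone h) (x : ℝ) :
    maxF (g - h) x ≤ rightLim g x - leftLim h x := by
  rw [maxF, hg.leftLim_sub hh, hg.rightLim_sub hh, Pi.sub_apply]
  refine max_le ?_ (max_le ?_ ?_)
  · exact sub_le_sub (hg.le_rightLim le_rfl) (hh.leftLim_le le_rfl)
  · exact sub_le_sub_right (hg.leftLim_le_rightLim le_rfl) _
  · exact sub_le_sub_left (hh.leftLim_le_rightLim le_rfl) _

lemma minF_sub (hg : Monotone g) (hh : Monotone h) : minF (g - h) = -maxF (h - g) := by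
  funext x
  simp only [minF, maxF, Pi.neg_apply, Pi.sub_apply, hg.leftLim_sub hh, hg.rightLim_sub hh,
    hh.leftLim_sub hg, hh.rightLim_sub hg, ← min_neg_neg, neg_sub]

lemma upperSemicontinuous_maxF_sub (hg : Monotone g) (hh : Monotone h) :
    UpperSemicontinuous (maxF (g - h)) := by
  intro x u hu
  rw [← nhdsNE_sup_pure, eventually_sup, ← nhdsLT_sup_nhdsGT, eventually_sup]
  refine ⟨⟨?_, ?_⟩, eventually_pure.mpr hu⟩
  · have hlim : Tendsto (fun y => leftLim g x - leftLim h y) (𝓝[<] x)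
        (𝓝 (leftLim (g - h) x)) := by
      rw [hg.leftLim_sub hh]
      exact tendsto_const_nhds.sub ((continuousWithinAt_leftLim_Iic
        (hh.tendsto_leftLim x)).tendsto.mono_left (nhdsWithin_mono _ Iio_subset_Iic_self))
    filter_upwards [hlim.eventually_lt_const ((leftLim_le_maxF _ x).trans_lt hu),
      self_mem_nhdsWithin] with y hy (hyx : y < x)
    exact (hg.maxF_sub_le hh y).trans_lt
      ((sub_le_sub_right (hg.rightLim_le_leftLim hyx) _).trans_lt hy)
  · have hlim : Tendsto (fun y => rightLim g y - rightLim h x) (𝓝[>] x)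
        (𝓝 (rightLim (g - h) x)) := by
      rw [hg.rightLim_sub hh]
      exact ((continuousWithinAt_rightLim_Ici (hg.tendsto_rightLim x)).tendsto.mono_left
        (nhdsWithin_mono _ Ioi_subset_Ici_self)).sub tendsto_const_nhds
    filter_upwards [hlim.eventually_lt_const ((rightLim_le_maxF _ x).trans_lt hu),
      self_mem_nhdsWithin] with y hy (hxy : x < y)
    exact (hg.maxF_sub_le hh y).trans_lt
      ((sub_le_sub_left (hh.rightLim_le_leftLim hxy) _).trans_lt hy)

lemma lowerSemicontinuous_minF_sub (hg : Monotone g) (hh : Monotone h) :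
    LowerSemicontinuous (minF (g - h)) := by
  rw [hg.minF_sub hh]
  exact continuous_neg.comp_upperSemicontinuous_antitone (hh.upperSemicontinuous_maxF_sub hg)
    fun _ _ => neg_le_neg

end Monotone

namespace IsUseful

variable {F f um up : ℝ → ℝ}

lemma upperSemicontinuous_maxF (hF : IsUseful F f um up) : UpperSemicontinuous (maxF F) := by
  obtain ⟨g, h, hg, hh, rfl⟩ := hF.exists_monotone_sub
  exact hg.upperSemicontinuous_maxF_sub hh

lemma lowerSemicontinuous_minF (hF : IsUseful F f um up) : LowerSemicontinuous (minF F) := by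
  obtain ⟨g, h, hg, hh, rfl⟩ := hF.exists_monotone_sub
  exact hg.lowerSemicontinuous_minF_sub hh

end IsUseful

/-- Lemma 2.12:  for a useful function `F`, (1) the part of the graph of `F` in any closed box
is closed; (2) `F` attains a local maximum on any `[a,b]`, in the sense that there is `x ∈ [a,b]`
with `max F (y) ≤ max F (x)` for all `y ∈ [a,b]`; (3) dually, `F` attains a local minimum. -/
theorem useful_graph_closed_and_extrema (F f um up : ℝ → ℝ) (h : IsUseful F f um up) :
    (∀ a b c d : ℝ, a ≤ b → c ≤ d →
        IsClosed (graphOf F ∩ (Set.Icc a b ×ˢ Set.Icc c d))) ∧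
    (∀ a b : ℝ, a ≤ b → ∃ x ∈ Set.Icc a b, ∀ y ∈ Set.Icc a b, maxF F y ≤ maxF F x) ∧
    (∀ a b : ℝ, a ≤ b → ∃ x ∈ Set.Icc a b, ∀ y ∈ Set.Icc a b, minF F x ≤ minF F y) := by
  refine ⟨fun a b c d _ _ => ?_, fun a b hab => ?_, fun a b hab => ?_⟩
  · exact (isClosed_graphOf h.lowerSemicontinuous_minF h.upperSemicontinuous_maxF).inter
      (isClosed_Icc.prod isClosed_Icc)
  · exact (h.upperSemicontinuous_maxF.upperSemicontinuousOn _).exists_isMaxOn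
      (nonempty_Icc.2 hab) isCompact_Icc
  · exact (h.lowerSemicontinuous_minF.lowerSemicontinuousOn _).exists_isMinOn
      (nonempty_Icc.2 hab) isCompact_Icc
end
end

section
/- The function H is nonincreasing on [−∞,s), i.e., H(x) ≥ H(y) whenever x < y < s. Moreover H(z) = lim_{y→z⁻}H(y) for every z ∈ (−∞,s), and lim_{y→s⁻}H(y) = R₋(s). -/
/-!
Islands (Section 3.3 of the paper).  `R` is a useful function with `max R(x) = R(x)` for all
`x`, `s ∈ ℝ`, and `R(-∞) = Rinf` is a fixed value with `R(z) ≤ Rinf` for all `z < s`.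
A (red) island in `K = [-∞, s)` is an open interval `(x, y) ⊆ K` (with `x = -∞` allowed,
encoded by `⊥ : EReal`) as in the definition below.  Lemma 3.4 of the paper:  `z ∈ (-∞, s)`
lies in the interior of an island iff `R(z) < R(y)` for some `y ∈ (z, s)`.
-/

noncomputable section

open Filter Topology

/-- `max R (x) = R x` for every `x`, i.e. both one-sided limits are `≤ R x`. -/
def MaxEqSelf (R : ℝ → ℝ) : Prop :=
  ∀ a : ℝ, Function.leftLim R a ≤ R a ∧ Function.rightLim R a ≤ R a

/-- The value of `R` at a point of `[-∞, ∞)`, where `R(-∞) = Rinf`. -/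
def Rval (R : ℝ → ℝ) (Rinf : ℝ) (x : EReal) : ℝ :=
  if x = ⊥ then Rinf else R x.toReal

/-- `(x, y)` is a (red) island in `K = [-∞, s)`:  either
(i) `y = s`, `R(x) ≥ R₋(s)` and `R(z) < R₋(s)` for all `z ∈ (x, s)`; or
(ii) `y < s`, `R(x) ≥ R(y) ≥ R₋(s)`, `R(z) < R(y)` for all `z ∈ (x, y)`, and
`R(w) ≤ R(y)` for all `w ∈ (y, s)`. -/
def IsIsland (R : ℝ → ℝ) (Rinf s : ℝ) (x y : EReal) : Prop :=
  x < y ∧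
  ((y = (s : EReal) ∧ Function.leftLim R s ≤ Rval R Rinf x ∧
      ∀ z : ℝ, x < (z : EReal) → z < s → R z < Function.leftLim R s) ∨
   (∃ yr : ℝ, y = (yr : EReal) ∧ yr < s ∧
      R yr ≤ Rval R Rinf x ∧ Function.leftLim R s ≤ R yr ∧
      (∀ z : ℝ, x < (z : EReal) → (z : EReal) < y → R z < R yr) ∧
      (∀ w : ℝ, yr < w → w < s → R w ≤ R yr)))


/-- The function `H : [-∞, s) → ℝ` flattening the islands of `R`:
`H(z) = R(y)` if `z ∈ (x, y]` for an island `(x, y)` with `y < s`; `H(z) = R₋(s)` if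
`z ∈ (x, s)` for an island `(x, s)`; and `H(z) = R(z)` otherwise. -/
noncomputable def Hfun (R : ℝ → ℝ) (Rinf s : ℝ) (z : EReal) : ℝ := by
  classical
  exact
    if h : ∃ x y : EReal, IsIsland R Rinf s x y ∧ x < z ∧ z ≤ y ∧ y < (s : EReal) then
      R (h.choose_spec.choose).toReal
    else if ∃ x : EReal, IsIsland R Rinf s x (s : EReal) ∧ x < z ∧ z < (s : EReal) then
      Function.leftLim R s
    else Rval R Rinf z

/-!
A useful function has one-sided limits everywhere, so `max R = R` makes it upper semicontinuous.
For real `z < s` the islands then give the closed form `H z = max (R₋ s) (sup R [z, s))`: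
if `z` lies in an island `(x, y)` with `y < s`, then `R y` is the maximum of `R` on `[z, s)`;
if it lies in an island `(x, s)`, then `R < R₋ s` on `[z, s)`; and if `R z` is not already the
maximum of `R` on `[z, s)`, an island through `z` is built from the leftmost maximiser of `R` on
`(z, s)` (or, when there is none, from `R₋ s`) together with the last point on the left of `z`
where `R` reaches that value. Monotonicity and left continuity of `H` are read off this formula.
-/

open Set Function

lemma IsUpperSet.monotone_indicator_one {α : Type*} [Preorder α] {s : Set α}
    (hs : IsUpperSet s) : Monotone (s.indicator (1 : α → ℝ)) := by
  intro a b hab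
  by_cases ha : a ∈ s
  · simp [ha, hs hab ha]
  · simp only [indicator_of_notMem ha]
    exact indicator_nonneg (fun _ _ => zero_le_one) b

lemma abs_indicator_one_le_one {α : Type*} (s : Set α) (t : α) :
    |s.indicator (1 : α → ℝ) t| ≤ 1 := by
  simpa using norm_indicator_le_norm_self (s := s) (f := (1 : α → ℝ)) (a := t)

lemma exists_tendsto_tsum_mul {ι α : Type*} {l : Filter α} {u : ι → ℝ}
    (hu : Summable fun i => |u i|) {g : ι → α → ℝ} (hg : ∀ i, ∃ c, Tendsto (g i) l (𝓝 c))
    (hg1 : ∀ i t, |g i t| ≤ 1) :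
    ∃ c, Tendsto (fun t => ∑' i, u i * g i t) l (𝓝 c) := by
  choose c hc using hg
  refine ⟨_, tendsto_tsum_of_dominated_convergence hu (fun i => (hc i).const_mul (u i)) ?_⟩
  refine Eventually.of_forall fun t i => ?_
  rw [norm_mul, Real.norm_eq_abs, Real.norm_eq_abs]
  exact mul_le_of_le_one_right (abs_nonneg _) (hg1 i t)

namespace IsUseful

variable {R f um up : ℝ → ℝ}

lemma exists_tendsto (h : IsUseful R f um up) {l : Filter ℝ} {a : ℝ} (hl : l ≤ 𝓝 a)
    (hmono : ∀ g : ℝ → ℝ, Monotone g → ∃ c, Tendsto g l (𝓝 c)) :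
    ∃ c, Tendsto R l (𝓝 c) := by
  obtain ⟨c₁, h₁⟩ := exists_tendsto_tsum_mul h.summable_um
    (fun x => hmono _ (isUpperSet_Ici x).monotone_indicator_one)
    (fun x => abs_indicator_one_le_one (Ici x))
  obtain ⟨c₂, h₂⟩ := exists_tendsto_tsum_mul h.summable_up
    (fun x => hmono _ (isUpperSet_Ioi x).monotone_indicator_one)
    (fun x => abs_indicator_one_le_one (Ioi x))
  exact ⟨_, ((((h.cont.tendsto a).mono_left hl).add h₁).add h₂).congr fun t => (h.decomp t).symm⟩

lemma tendsto_leftLim (h : IsUseful R f um up) (a : ℝ) :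
    Tendsto R (𝓝[<] a) (𝓝 (leftLim R a)) :=
  tendsto_leftLim_of_tendsto
    (h.exists_tendsto nhdsWithin_le_nhds fun _ hg => ⟨_, hg.tendsto_nhdsLT a⟩)

lemma tendsto_rightLim (h : IsUseful R f um up) (a : ℝ) :
    Tendsto R (𝓝[>] a) (𝓝 (rightLim R a)) :=
  tendsto_rightLim_of_tendsto
    (h.exists_tendsto nhdsWithin_le_nhds fun _ hg => ⟨_, hg.tendsto_nhdsGT a⟩)

lemma upperSemicontinuous (h : IsUseful R f um up) (hmax : MaxEqSelf R) :
    UpperSemicontinuous R := by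
  intro a y hy
  have hlt : ∀ᶠ u in 𝓝[<] a, R u < y :=
    (h.tendsto_leftLim a).eventually_lt_const ((hmax a).1.trans_lt hy)
  have hgt : ∀ᶠ u in 𝓝[>] a, R u < y :=
    (h.tendsto_rightLim a).eventually_lt_const ((hmax a).2.trans_lt hy)
  have hge : ∀ᶠ u in 𝓝[≥] a, R u < y := by
    rw [← Ioi_insert, nhdsWithin_insert, eventually_sup]
    exact ⟨hy, hgt⟩
  rw [← nhdsLT_sup_nhdsGE a, eventually_sup]
  exact ⟨hlt, hge⟩

end IsUseful

lemma le_of_tendsto_nhdsLT_of_forall_Ioo_le {g : ℝ → ℝ} {a z c L : ℝ}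
    (hg : Tendsto g (𝓝[<] a) (𝓝 L)) (hz : z < a) (h : ∀ u ∈ Ioo z a, g u ≤ c) : L ≤ c :=
  le_of_tendsto hg (eventually_of_mem (Ioo_mem_nhdsLT hz) h)

lemma tendsto_sSup_image_Ico {g : ℝ → ℝ} {a L : ℝ} (hg : Tendsto g (𝓝[<] a) (𝓝 L)) :
    Tendsto (fun w => sSup (g '' Ico w a)) (𝓝[<] a) (𝓝 L) := by
  have hbound : ∀ m, L < m → ∀ᶠ w in 𝓝[<] a, w < a ∧ ∀ u ∈ Ico w a, g u < m := by
    intro m hm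
    obtain ⟨c, hca, hc⟩ := (mem_nhdsLT_iff_exists_Ioo_subset' (sub_one_lt a)).1
      (hg.eventually (gt_mem_nhds hm))
    filter_upwards [Ioo_mem_nhdsLT hca] with w hw
    exact ⟨hw.2, fun u hu => hc ⟨hw.1.trans_le hu.1, hu.2⟩⟩
  have hsup : ∀ w m, w < a → (∀ u ∈ Ico w a, g u < m) →
      BddAbove (g '' Ico w a) ∧ sSup (g '' Ico w a) ≤ m := by
    intro w m hwa hw
    have hub : m ∈ upperBounds (g '' Ico w a) := by
      rintro _ ⟨u, hu, rfl⟩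
      exact (hw u hu).le
    exact ⟨⟨m, hub⟩, csSup_le ((nonempty_Ico.2 hwa).image g) hub⟩
  refine tendsto_order.2 ⟨fun m hm => ?_, fun m hm => ?_⟩
  · filter_upwards [hg.eventually (lt_mem_nhds hm), hbound (L + 1) (lt_add_one L)]
      with w hw ⟨hwa, hb⟩
    exact hw.trans_le (le_csSup (hsup w _ hwa hb).1 (mem_image_of_mem g ⟨le_rfl, hwa⟩))
  · obtain ⟨m', hLm', hm'm⟩ := exists_between hm
    filter_upwards [hbound m' hLm'] with w ⟨hwa, hb⟩
    exact (hsup w m' hwa hb).2.trans_lt hm'm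

@[simp] lemma Rval_bot (R : ℝ → ℝ) (Rinf : ℝ) : Rval R Rinf ⊥ = Rinf := if_pos rfl

@[simp] lemma Rval_coe (R : ℝ → ℝ) (Rinf x : ℝ) : Rval R Rinf x = R x := by
  simp [Rval]

namespace UpperSemicontinuous

variable {R : ℝ → ℝ} (hR : UpperSemicontinuous R)
include hR

/-- If `u` is not a maximiser, take `v` with `R u < R v`: then `R < R v` near `a` (upper
semicontinuity) and near `b` (the left limit there is `< R v`), so the maximum over `(a, b)` is
the maximum over a compact subinterval. -/
lemma exists_isMaxOn_Ioo {a b L u : ℝ} (hb : Tendsto R (𝓝[<] b) (𝓝 L)) (hu : u ∈ Ioo a b)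
    (hau : R a < R u) (hLu : L ≤ R u) : ∃ y ∈ Ioo a b, IsMaxOn R (Ioo a b) y := by
  by_cases hmax : IsMaxOn R (Ioo a b) u
  · exact ⟨u, hu, hmax⟩
  obtain ⟨v, hv, huv⟩ : ∃ v ∈ Ioo a b, R u < R v := by simpa [isMaxOn_iff, and_assoc] using hmax
  obtain ⟨c, hac, hc⟩ := (mem_nhdsGT_iff_exists_Ioo_subset' hv.1).1
    ((hR a _ (hau.trans huv)).filter_mono nhdsWithin_le_nhds)
  obtain ⟨d, hdb, hd⟩ := (mem_nhdsLT_iff_exists_Ioo_subset' hv.2).1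
    (hb.eventually (gt_mem_nhds (hLu.trans_lt huv)))
  set K := Icc c d ∩ R ⁻¹' Ici (R v)
  have hK : ∀ t ∈ Ioo a b, R v ≤ R t → t ∈ K := fun t ht hvt =>
    ⟨⟨le_of_not_gt fun htc => (hc ⟨ht.1, htc⟩).not_ge hvt,
      le_of_not_gt fun hdt => (hd ⟨hdt, ht.2⟩).not_ge hvt⟩, hvt⟩
  obtain ⟨y, hyK, hyK_max⟩ := (hR.upperSemicontinuousOn K).exists_isMaxOn ⟨v, hK v hv le_rfl⟩
    (isCompact_Icc.inter_right (hR.isClosed_preimage _))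
  refine ⟨y, ⟨hac.trans_le hyK.1.1, hyK.1.2.trans_lt hdb⟩, fun t ht => ?_⟩
  by_cases hvt : R v ≤ R t
  · exact hyK_max (hK t ht hvt)
  · exact (lt_of_not_ge hvt).le.trans hyK.2

lemma exists_first_isMaxOn_Ioo {a b y : ℝ} (hy : y ∈ Ioo a b) (hmax : IsMaxOn R (Ioo a b) y)
    (hay : R a < R y) :
    ∃ y' ∈ Ioo a b, IsMaxOn R (Ioo a b) y' ∧ ∀ t ∈ Ioo a y', R t < R y' := by
  have hyC : y ∈ Icc a y ∩ R ⁻¹' Ici (R y) := ⟨⟨hy.1.le, le_rfl⟩, mem_preimage.2 (mem_Ici.2 le_rfl)⟩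
  obtain ⟨y', hy'C, hleast⟩ :=
    (isCompact_Icc.inter_right (hR.isClosed_preimage (R y))).exists_isLeast ⟨y, hyC⟩
  have hay' : a < y' := hy'C.1.1.lt_of_ne (by rintro rfl; exact hay.not_ge hy'C.2)
  have hy' : y' ∈ Ioo a b := ⟨hay', hy'C.1.2.trans_lt hy.2⟩
  have hRy' : R y' = R y := le_antisymm (hmax hy') hy'C.2
  refine ⟨y', hy', fun t ht => (hmax ht).trans hRy'.ge, fun t ht => lt_of_not_ge fun hyt => ?_⟩
  exact ht.2.not_ge (hleast ⟨⟨ht.1.le, ht.2.le.trans hy'C.1.2⟩, hRy' ▸ hyt⟩)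

/-- `x` is the last point `≤ z` where `R` reaches `v` (it exists because `{v ≤ R}` is closed),
or `-∞` if there is none. -/
lemma exists_left_end {Rinf z v : ℝ} (hz : R z < v) (hv : v ≤ Rinf) :
    ∃ x : EReal, x < z ∧ v ≤ Rval R Rinf x ∧ ∀ t : ℝ, x < t → t ≤ z → R t < v := by
  set C := Iic z ∩ R ⁻¹' Ici v
  by_cases hC : C.Nonempty
  · have hCbdd : BddAbove C := ⟨z, fun t ht => ht.1⟩
    have hxC : sSup C ∈ C := (isClosed_Iic.inter (hR.isClosed_preimage v)).csSup_mem hC hCbdd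
    have hxz : sSup C < z := hxC.1.lt_of_ne fun h => hz.not_ge (h ▸ hxC.2)
    refine ⟨(sSup C : ℝ), EReal.coe_lt_coe_iff.2 hxz, by simpa using hxC.2, fun t hxt htz => ?_⟩
    exact lt_of_not_ge fun hvt => (EReal.coe_lt_coe_iff.1 hxt).not_ge (le_csSup hCbdd ⟨htz, hvt⟩)
  · exact ⟨⊥, EReal.bot_lt_coe z, by simpa using hv,
      fun t _ htz => lt_of_not_ge fun hvt => hC ⟨t, htz, hvt⟩⟩

end UpperSemicontinuous

section Islands

variable {R : ℝ → ℝ} {Rinf s : ℝ}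

lemma IsIsland.isGreatest_image_Ico {x y : EReal} (hI : IsIsland R Rinf s x y) (hys : y < s)
    {z : ℝ} (hxz : x < z) (hzy : (z : EReal) ≤ y) :
    IsGreatest (R '' Ico z s) (R y.toReal) ∧ leftLim R s ≤ R y.toReal := by
  rcases hI.2 with ⟨rfl, -⟩ | ⟨y, rfl, hys, -, hL, hlt, hle⟩
  · exact absurd hys (lt_irrefl _)
  rw [EReal.toReal_coe]
  refine ⟨⟨⟨y, ⟨EReal.coe_le_coe_iff.1 hzy, hys⟩, rfl⟩, ?_⟩, hL⟩
  rintro _ ⟨u, hu, rfl⟩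
  rcases lt_trichotomy u y with h | rfl | h
  · exact (hlt u (hxz.trans_le (EReal.coe_le_coe_iff.2 hu.1)) (EReal.coe_lt_coe_iff.2 h)).le
  · exact le_rfl
  · exact hle u h hu.2

lemma IsIsland.lt_leftLim {x : EReal} (hI : IsIsland R Rinf s x s) {u : ℝ} (hxu : x < u)
    (hus : u < s) : R u < leftLim R s := by
  rcases hI.2 with ⟨-, -, hlt⟩ | ⟨y, hy, hys, -⟩
  · exact hlt u hxu hus
  · exact absurd (EReal.coe_injective hy) hys.ne'

lemma Hfun_bot : Hfun R Rinf s ⊥ = Rinf := by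
  unfold Hfun
  rw [dif_neg (by simp), if_neg (by simp), Rval_bot]

lemma bddAbove_image_Ico (hRinf : ∀ z : ℝ, z < s → R z ≤ Rinf) (z : ℝ) :
    BddAbove (R '' Ico z s) :=
  ⟨Rinf, by rintro _ ⟨u, hu, rfl⟩; exact hRinf u hu.2⟩

variable (hR : UpperSemicontinuous R) (hs : Tendsto R (𝓝[<] s) (𝓝 (leftLim R s)))
  (hRinf : ∀ z : ℝ, z < s → R z ≤ Rinf)
include hR hs hRinf

/-- One direction of Lemma 3.4 of the paper; the two alternatives are the first two branches of
`Hfun`. -/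
lemma exists_island {z u : ℝ} (hu : u ∈ Ioo z s) (hzu : R z < R u) :
    (∃ x y : EReal, IsIsland R Rinf s x y ∧ x < z ∧ (z : EReal) ≤ y ∧ y < s) ∨
      ∃ x : EReal, IsIsland R Rinf s x s ∧ x < z ∧ (z : EReal) < s := by
  have hz : z < s := hu.1.trans hu.2
  by_cases hatt : ∃ y ∈ Ioo z s, IsMaxOn R (Ioo z s) y
  · obtain ⟨y₀, hy₀, hmax₀⟩ := hatt
    obtain ⟨y, hy, hmax, hfirst⟩ := hR.exists_first_isMaxOn_Ioo hy₀ hmax₀ (hzu.trans_le (hmax₀ hu))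
    obtain ⟨x, hxz, hxy, hlt⟩ := hR.exists_left_end (hzu.trans_le (hmax hu)) (hRinf y hy.2)
    have hL : leftLim R s ≤ R y := le_of_tendsto_nhdsLT_of_forall_Ioo_le hs hz fun w hw => hmax hw
    refine Or.inl ⟨x, y, ⟨hxz.trans (EReal.coe_lt_coe_iff.2 hy.1),
      Or.inr ⟨y, rfl, hy.2, hxy, hL, fun t hxt hty => ?_,
        fun w hyw hws => hmax ⟨hy.1.trans hyw, hws⟩⟩⟩,
      hxz, EReal.coe_le_coe_iff.2 hy.1.le, EReal.coe_lt_coe_iff.2 hy.2⟩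
    rcases le_or_gt t z with htz | hzt
    · exact hlt t hxt htz
    · exact hfirst t ⟨hzt, EReal.coe_lt_coe_iff.1 hty⟩
  · have hltL : ∀ t ∈ Ioo z s, R t < leftLim R s := fun t ht => lt_of_not_ge fun hLt => by
      rcases lt_or_ge (R z) (R t) with hzt | htz
      · exact hatt (hR.exists_isMaxOn_Ioo hs ht hzt hLt)
      · exact hatt (hR.exists_isMaxOn_Ioo hs hu hzu (hLt.trans (htz.trans hzu.le)))
    have hLinf : leftLim R s ≤ Rinf :=
      le_of_tendsto_nhdsLT_of_forall_Ioo_le hs hz fun t ht => hRinf t ht.2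
    obtain ⟨x, hxz, hxL, hlt⟩ := hR.exists_left_end (hzu.trans (hltL u hu)) hLinf
    refine Or.inr ⟨x, ⟨hxz.trans (EReal.coe_lt_coe_iff.2 hz),
      Or.inl ⟨rfl, hxL, fun t hxt hts => ?_⟩⟩, hxz, EReal.coe_lt_coe_iff.2 hz⟩
    rcases le_or_gt t z with htz | hzt
    · exact hlt t hxt htz
    · exact hltL t ⟨hzt, hts⟩

lemma Hfun_coe_eq {z : ℝ} (hz : z < s) :
    Hfun R Rinf s z = max (leftLim R s) (sSup (R '' Ico z s)) := by
  unfold Hfun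
  split_ifs with h₁ h₂
  · obtain ⟨hI, hxz, hzy, hys⟩ := h₁.choose_spec.choose_spec
    obtain ⟨hG, hL⟩ := hI.isGreatest_image_Ico hys hxz hzy
    rw [hG.csSup_eq, max_eq_right hL]
  · obtain ⟨x, hI, hxz, -⟩ := h₂
    refine (max_eq_left (csSup_le ((nonempty_Ico.2 hz).image R) ?_)).symm
    rintro _ ⟨u, hu, rfl⟩
    exact (hI.lt_leftLim (hxz.trans_le (EReal.coe_le_coe_iff.2 hu.1)) hu.2).le
  · have hle : ∀ u ∈ Ioo z s, R u ≤ R z := fun u hu =>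
      le_of_not_gt fun hzu => (exists_island hR hs hRinf hu hzu).elim h₁ h₂
    have hG : IsGreatest (R '' Ico z s) (R z) := by
      refine ⟨mem_image_of_mem R ⟨le_rfl, hz⟩, ?_⟩
      rintro _ ⟨u, hu, rfl⟩
      rcases hu.1.eq_or_lt with rfl | hzu
      · exact le_rfl
      · exact hle u ⟨hzu, hu.2⟩
    rw [Rval_coe, hG.csSup_eq, max_eq_right (le_of_tendsto_nhdsLT_of_forall_Ioo_le hs hz hle)]

lemma Hfun_antitone {x y : EReal} (hxy : x < y) (hys : y < s) :
    Hfun R Rinf s y ≤ Hfun R Rinf s x := by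
  lift y to ℝ using ⟨hys.ne_top, hxy.ne_bot⟩
  have hy : y < s := EReal.coe_lt_coe_iff.1 hys
  rw [Hfun_coe_eq hR hs hRinf hy]
  induction x using EReal.rec with
  | bot =>
    rw [Hfun_bot]
    refine max_le (le_of_tendsto_nhdsLT_of_forall_Ioo_le hs hy fun t ht => hRinf t ht.2)
      (csSup_le ((nonempty_Ico.2 hy).image R) ?_)
    rintro _ ⟨u, hu, rfl⟩
    exact hRinf u hu.2
  | coe x =>
    rw [Hfun_coe_eq hR hs hRinf ((EReal.coe_lt_coe_iff.1 hxy).trans hy)]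
    exact max_le_max le_rfl (csSup_le_csSup (bddAbove_image_Ico hRinf x)
      ((nonempty_Ico.2 hy).image R)
      (image_mono (Ico_subset_Ico_left (EReal.coe_le_coe_iff.1 hxy.le))))
  | top => exact absurd hxy not_top_lt

lemma tendsto_Hfun_nhdsLT {z : ℝ} (hz : z < s) (hlim : Tendsto R (𝓝[<] z) (𝓝 (leftLim R z)))
    (hRz : leftLim R z ≤ R z) :
    Tendsto (fun w : ℝ => Hfun R Rinf s w) (𝓝[<] z) (𝓝 (Hfun R Rinf s z)) := by
  have hsplit : ∀ w < z, sSup (R '' Ico w s) = max (sSup (R '' Ico w z)) (sSup (R '' Ico z s)) :=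
    fun w hw => by
      rw [← Ico_union_Ico_eq_Ico hw.le hz.le, image_union, csSup_union
        ((bddAbove_image_Ico hRinf w).mono (image_mono (Ico_subset_Ico_right hz.le)))
        ((nonempty_Ico.2 hw).image R) (bddAbove_image_Ico hRinf z) ((nonempty_Ico.2 hz).image R)]
  have hleft := (tendsto_sSup_image_Ico hlim).max (tendsto_const_nhds (x := sSup (R '' Ico z s)))
  rw [max_eq_right (hRz.trans (le_csSup (bddAbove_image_Ico hRinf z)
    (mem_image_of_mem R ⟨le_rfl, hz⟩)))] at hleft
  rw [Hfun_coe_eq hR hs hRinf hz]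
  refine (tendsto_const_nhds.max hleft).congr' ?_
  filter_upwards [self_mem_nhdsWithin] with w (hw : w < z)
  rw [Hfun_coe_eq hR hs hRinf (hw.trans hz), hsplit w hw]

lemma tendsto_Hfun_nhdsLT_self :
    Tendsto (fun w : ℝ => Hfun R Rinf s w) (𝓝[<] s) (𝓝 (leftLim R s)) := by
  have h := (tendsto_const_nhds (x := leftLim R s)).max (tendsto_sSup_image_Ico hs)
  rw [max_self] at h
  refine h.congr' ?_
  filter_upwards [self_mem_nhdsWithin] with w (hw : w < s)
  rw [Hfun_coe_eq hR hs hRinf hw]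

end Islands

/-- Lemma 3.6:  `H` is nonincreasing on `[-∞, s)`, it is left-continuous on `(-∞, s)`,
and `H(y) → R₋(s)` as `y → s⁻`. -/
theorem Hfun_monotone_leftContinuous (R f um up : ℝ → ℝ) (h : IsUseful R f um up)
    (hmax : MaxEqSelf R) (s Rinf : ℝ) (hRinf : ∀ z : ℝ, z < s → R z ≤ Rinf) :
    (∀ x y : EReal, x < y → y < (s : EReal) → Hfun R Rinf s y ≤ Hfun R Rinf s x) ∧
    (∀ z : ℝ, z < s →
      Tendsto (fun w : ℝ => Hfun R Rinf s (w : EReal)) (nhdsWithin z (Set.Iio z))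
        (nhds (Hfun R Rinf s (z : EReal)))) ∧
    Tendsto (fun w : ℝ => Hfun R Rinf s (w : EReal)) (nhdsWithin s (Set.Iio s))
      (nhds (Function.leftLim R s)) := by
  have hR := h.upperSemicontinuous hmax
  have hs := h.tendsto_leftLim s
  exact ⟨fun x y hxy hys => Hfun_antitone hR hs hRinf hxy hys,
    fun z hz => tendsto_Hfun_nhdsLT hR hs hRinf hz (h.tendsto_leftLim z) (hmax z).1,
    tendsto_Hfun_nhdsLT_self hR hs hRinf⟩

end
end
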